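/- Let A be a positive self-adjoint operator with trivial kernel on L²(X) for a sigma-finite measure space X, and p > 1. Suppose that for every operator γ with 0 ≤ γ ≤ A and finite trace of γ^{1/2} A^{-1} γ^{1/2}, one has tr γ^{1/2} A^{-1} γ^{1/2} ≥ K ∫_X γ(x,x)^{p'} dx with p' = p/(p-1). Then for every non-negative b ∈ L_p(X) and μ > 0, tr(A^{1/2} b A^{1/2} - μ)_+ ≤ D μ^{-p+1} ∫_X b^p dx with D = K^{-p+1} (p-1)^{p-1}/p^p. -/

import Mathlib

/-!
Factor the inverse `R = A⁻¹` as `R = S† S`. Orthonormality of `g` for `⟨·, R ·⟩` is then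
orthonormality of the `S gᵢ`, and Bessel's inequality says that `γ = Σ |gᵢ⟩⟨gᵢ|` satisfies
`0 ≤ γ ≤ A`; the density hypothesis gives `K ∫ ρ^{p'} ≤ m` for `ρ = Σ |gᵢ|²`. Young's inequality
`b ρ ≤ C b^p + K μ ρ^{p'}`, with the optimal constant `C = D μ^{1-p}`, integrates to
`Σ (∫ b |gᵢ|² - μ) = ∫ b ρ - m μ ≤ C ∫ b^p`.

The density hypothesis says nothing when `ρ^{p'}` is not integrable (its integral is then `0`).
Applied to a single vector `φ` with `‖S φ‖ ≤ 1` (admissible by Cauchy–Schwarz), and to the bounded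
truncations of a small multiple of `u ∈ L²`, it bounds `∫ |u|^{2p'}` over the truncation sets
uniformly, so `|u|² ∈ L^{p'}`.
-/

open MeasureTheory Real ENNReal Filter

open scoped InnerProductSpace

theorem LinearMap.IsSymmetric.exists_inner_map_eq_inner_map_map {E : Type*}
    [NormedAddCommGroup E] [InnerProductSpace ℂ E] [CompleteSpace E] {R : E →ₗ[ℂ] E}
    (hR : R.IsSymmetric) (hRpos : ∀ f, 0 ≤ (⟪f, R f⟫_ℂ).re) :
    ∃ S : E →L[ℂ] E, ∀ f g, ⟪f, R g⟫_ℂ = ⟪S f, S g⟫_ℂ := by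
  have hnonneg : 0 ≤ (⟨R, hR.continuous⟩ : E →L[ℂ] E) := by
    refine (ContinuousLinearMap.nonneg_iff_isPositive _).mpr ⟨hR, fun f => ?_⟩
    simpa [ContinuousLinearMap.reApplyInnerSelf, hR f f] using hRpos f
  obtain ⟨S, hS⟩ := CStarAlgebra.nonneg_iff_eq_star_mul_self.mp hnonneg
  refine ⟨S, fun f g => ?_⟩
  have hRg : R g = (star S * S) g := congrArg (fun T : E →L[ℂ] E => T g) hS
  rw [hRg, ContinuousLinearMap.star_eq_adjoint]
  exact S.adjoint_inner_right f (S g)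

theorem Real.young_inequality_of_nonneg_weighted {p q a t c : ℝ} (hpq : p.HolderConjugate q)
    (ha : 0 ≤ a) (ht : 0 ≤ t) (hc : 0 < c) :
    a * t ≤ (q * c) ^ (1 - p) / p * a ^ p + c * t ^ q := by
  have hqc : 0 < q * c := mul_pos hpq.symm.pos hc
  set s := (q * c) ^ q⁻¹
  have hs : 0 < s := by positivity
  have hsq : s ^ q = q * c := by rw [← rpow_mul hqc.le, inv_mul_cancel₀ hpq.symm.ne_zero, rpow_one]
  have hsp : s⁻¹ ^ p = (q * c) ^ (1 - p) := by
    rw [inv_rpow hs.le, ← rpow_neg hs.le, ← rpow_mul hqc.le, mul_neg, inv_mul_eq_div,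
      hpq.div_conj_eq_sub_one, neg_sub]
  have h := young_inequality_of_nonneg (mul_nonneg (inv_nonneg.mpr hs.le) ha)
    (mul_nonneg hs.le ht) hpq
  rw [mul_rpow (inv_nonneg.mpr hs.le) ha, mul_rpow hs.le ht, hsp, hsq] at h
  calc a * t = s⁻¹ * a * (s * t) := by field_simp
    _ ≤ _ := h
    _ = _ := by field_simp [hpq.symm.ne_zero]

theorem Real.sq_rpow_le_mul_sq_of_le {a N q : ℝ} (ha : 0 ≤ a) (haN : a ≤ N) (hq : 1 ≤ q) :
    (a ^ 2) ^ q ≤ (N ^ 2) ^ (q - 1) * a ^ 2 := by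
  calc (a ^ 2) ^ q = (a ^ 2) ^ (q - 1) * a ^ 2 := by
        rw [← rpow_add_one' (by positivity) (by rw [sub_add_cancel]; positivity), sub_add_cancel]
    _ ≤ (N ^ 2) ^ (q - 1) * a ^ 2 := by gcongr

theorem conjExponent_mul_rpow_one_sub_div {p K μ : ℝ} (hp : 1 < p) (hK : 0 < K) (hμ : 0 < μ) :
    (p / (p - 1) * (K * μ)) ^ (1 - p) / p
      = K ^ (-p + 1) * ((p - 1) ^ (p - 1) / p ^ p) * μ ^ (-p + 1) := by
  have hp0 : 0 < p := by linarith
  have hp1 : 0 < p - 1 := by linarith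
  rw [mul_rpow (by positivity) (by positivity), mul_rpow hK.le hμ.le,
    div_rpow hp0.le hp1.le, show 1 - p = -(p - 1) by ring, show -p + 1 = -(p - 1) by ring,
    rpow_neg hp0.le, rpow_neg hp1.le, rpow_neg hK.le, rpow_neg hμ.le,
    show p ^ p = p ^ (p - 1) * p by rw [← rpow_add_one hp0.ne', sub_add_cancel]]
  field_simp

section Integration

variable {X E : Type*} [MeasurableSpace X] {μ : Measure X}

theorem MeasureTheory.MemLp.integrable_rpow_of_nonneg {f : X → ℝ} {r : ℝ} (hr : 0 < r)
    (hf : ∀ x, 0 ≤ f x) (hmem : MemLp f (ENNReal.ofReal r) μ) :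
    Integrable (fun x => f x ^ r) μ := by
  simpa [norm_of_nonneg (hf _), toReal_ofReal hr.le] using
    hmem.integrable_norm_rpow (by simpa using hr) ofReal_ne_top

theorem integral_mul_le_rpow_add_rpow {p q c : ℝ} (hpq : p.HolderConjugate q) (hc : 0 < c)
    {f h : X → ℝ} (hf : ∀ x, 0 ≤ f x) (hh : ∀ x, 0 ≤ h x)
    (hfp : Integrable (fun x => f x ^ p) μ) (hhq : Integrable (fun x => h x ^ q) μ) :
    ∫ x, f x * h x ∂μ ≤ (q * c) ^ (1 - p) / p * ∫ x, f x ^ p ∂μ + c * ∫ x, h x ^ q ∂μ := by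
  rw [← integral_const_mul, ← integral_const_mul,
    ← integral_add (hfp.const_mul _) (hhq.const_mul _)]
  exact integral_mono_of_nonneg (.of_forall fun x => mul_nonneg (hf x) (hh x))
    ((hfp.const_mul _).add (hhq.const_mul _))
    (.of_forall fun x => young_inequality_of_nonneg_weighted hpq (hf x) (hh x) hc)

theorem MeasureTheory.Lp.integrable_sq_norm_rpow_of_forall_norm_le [NormedAddCommGroup E]
    {q M : ℝ} (hq : 1 ≤ q) (u : Lp E 2 μ)
    (h : ∀ φ : Lp E 2 μ, ‖φ‖ ≤ ‖u‖ → ∫ x, (‖φ x‖ ^ 2) ^ q ∂μ ≤ M) :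
    Integrable (fun x => (‖u x‖ ^ 2) ^ q) μ := by
  have hu := Lp.aestronglyMeasurable u
  let A : ℕ → Set X := fun N => {x | ‖hu.mk u x‖ ≤ N}
  have hA N : MeasurableSet (A N) :=
    measurableSet_le hu.stronglyMeasurable_mk.norm.measurable measurable_const
  have hcover : AECover μ atTop A :=
    ⟨.of_forall fun x => tendsto_natCast_atTop_atTop.eventually_ge_atTop ‖hu.mk u x‖, hA⟩
  have hmeas : AEStronglyMeasurable (fun x => (‖u x‖ ^ 2) ^ q) μ := by
    fun_prop (disch := linarith)
  refine hcover.integrable_of_integral_norm_bounded M (fun N => ?_) (.of_forall fun N => ?_)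
  · have hbound : ∀ᵐ x ∂μ.restrict (A N), ‖(‖u x‖ ^ 2) ^ q‖ ≤ (N ^ 2) ^ (q - 1) * ‖u x‖ ^ 2 := by
      refine (ae_restrict_iff' (hA N)).mpr ?_
      filter_upwards [hu.ae_eq_mk] with x hx hxA
      rw [norm_of_nonneg (by positivity)]
      exact sq_rpow_le_mul_sq_of_le (norm_nonneg _) (hx ▸ hxA) hq
    exact Integrable.mono' (((memLp_two_iff_integrable_sq_norm hu).mp (Lp.memLp u)).const_mul _
      |>.integrableOn) hmeas.restrict hbound
  · have hind := (Lp.memLp u).indicator (hA N)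
    have hφ : ‖hind.toLp‖ ≤ ‖u‖ := by
      rw [Lp.norm_toLp, Lp.norm_def]
      exact toReal_mono (Lp.eLpNorm_ne_top u) (eLpNorm_indicator_le _)
    refine le_of_eq_of_le ?_ (h _ hφ)
    rw [← integral_indicator (hA N)]
    refine integral_congr_ae ?_
    filter_upwards [hind.coeFn_toLp] with x hx
    rw [hx]
    by_cases hxA : x ∈ A N
    · rw [Set.indicator_of_mem hxA, Set.indicator_of_mem hxA, norm_of_nonneg (by positivity)]
    · rw [Set.indicator_of_notMem hxA, Set.indicator_of_notMem hxA]
      simp [zero_rpow (by linarith : q ≠ 0)]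

theorem MeasureTheory.Lp.memLp_sq_norm_of_forall_norm_map_le_one {𝕜 F : Type*} [RCLike 𝕜]
    [NormedAddCommGroup E] [NormedSpace 𝕜 E] [SeminormedAddCommGroup F] [NormedSpace 𝕜 F]
    (S : Lp E 2 μ →L[𝕜] F) {q M : ℝ} (hq : 1 ≤ q)
    (h : ∀ φ : Lp E 2 μ, ‖S φ‖ ≤ 1 → ∫ x, (‖φ x‖ ^ 2) ^ q ∂μ ≤ M) (u : Lp E 2 μ) :
    MemLp (fun x => ‖u x‖ ^ 2) (ENNReal.ofReal q) μ := by
  obtain ⟨s, hs, hsu⟩ : ∃ s : ℝ, 0 < s ∧ ‖S‖ * ‖(s : 𝕜) • u‖ ≤ 1 := by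
    refine ⟨((‖S‖ + 1) * (‖u‖ + 1))⁻¹, by positivity, ?_⟩
    rw [norm_smul, RCLike.norm_ofReal, abs_of_pos (by positivity), mul_left_comm,
      inv_mul_le_iff₀ (by positivity)]
    nlinarith [norm_nonneg S, norm_nonneg u]
  have hint := integrable_sq_norm_rpow_of_forall_norm_le hq ((s : 𝕜) • u)
    fun φ hφ => h φ ((S.le_opNorm φ).trans (le_trans (by gcongr) hsu))
  have hmem : MemLp (fun x => ‖((s : 𝕜) • u) x‖ ^ 2) (ENNReal.ofReal q) μ := by
    refine (integrable_norm_rpow_iff (by fun_prop) (by simp; linarith) ofReal_ne_top).mp ?_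
    simpa [toReal_ofReal (by linarith : 0 ≤ q)] using hint
  refine (hmem.const_mul (s ^ 2)⁻¹).ae_eq ?_
  filter_upwards [Lp.coeFn_smul (s : 𝕜) u] with x hx
  simp [hx, norm_smul, mul_pow, hs.ne']

end Integration

section DensityInequality

variable {X 𝕜 E F : Type*} [MeasurableSpace X] {μ : Measure X} [RCLike 𝕜]
  [NormedAddCommGroup E] [NormedSpace 𝕜 E] [NormedAddCommGroup F] [InnerProductSpace 𝕜 F]

/-- With `A⁻¹ = S† S`, the premise says `0 ≤ γ ≤ A` for `γ = Σ |φⱼ⟩⟨φⱼ|`, and `Σ ‖S φⱼ‖²` is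
`tr γ^{1/2} A⁻¹ γ^{1/2}`. -/
def DensityInequality (S : Lp E 2 μ →L[𝕜] F) (K q : ℝ) : Prop :=
  ∀ (n : ℕ) (φ : Fin n → Lp E 2 μ), (∀ f, ∑ j, ‖⟪S (φ j), S f⟫_𝕜‖ ^ 2 ≤ ‖S f‖ ^ 2) →
    K * ∫ x, (∑ j, ‖φ j x‖ ^ 2) ^ q ∂μ ≤ ∑ j, ‖S (φ j)‖ ^ 2

variable {S : Lp E 2 μ →L[𝕜] F} {K q : ℝ}

theorem DensityInequality.integral_rpow_le_one (hD : DensityInequality S K q) {φ : Lp E 2 μ}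
    (hφ : ‖S φ‖ ≤ 1) : K * ∫ x, (‖φ x‖ ^ 2) ^ q ∂μ ≤ 1 := by
  have h := hD 1 (fun _ => φ) fun f => by
    rw [Fin.sum_univ_one]
    calc ‖⟪S φ, S f⟫_𝕜‖ ^ 2 ≤ (‖S φ‖ * ‖S f‖) ^ 2 := by gcongr; exact norm_inner_le_norm _ _
      _ ≤ ‖S f‖ ^ 2 := by gcongr; exact mul_le_of_le_one_left (norm_nonneg _) hφ
  simp only [Fin.sum_univ_one] at h
  exact h.trans (pow_le_one₀ (norm_nonneg _) hφ)

theorem DensityInequality.memLp_sq_norm (hD : DensityInequality S K q) (hq : 1 ≤ q) (hK : 0 < K)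
    (u : Lp E 2 μ) : MemLp (fun x => ‖u x‖ ^ 2) (ENNReal.ofReal q) μ :=
  Lp.memLp_sq_norm_of_forall_norm_map_le_one S hq (M := 1 / K)
    (fun _ hφ => by rw [le_div_iff₀ hK, mul_comm]; exact hD.integral_rpow_le_one hφ) u

theorem DensityInequality.integral_sum_rpow_le_card (hD : DensityInequality S K q) {m : ℕ}
    {g : Fin m → Lp E 2 μ} (hg : Orthonormal 𝕜 fun i => S (g i)) :
    K * ∫ x, (∑ j, ‖g j x‖ ^ 2) ^ q ∂μ ≤ m := by
  simpa [hg.1] using hD m g fun f => hg.sum_inner_products_le (S f)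

end DensityInequality

theorem duality_density_to_eigenvalue_general
    {X : Type*} [MeasurableSpace X] {μX : Measure X}
    {p K : ℝ} (hp : 1 < p) (hK : 0 < K)
    (R : Lp ℂ 2 μX →ₗ[ℂ] Lp ℂ 2 μX)
    (hRsym : ∀ f g : Lp ℂ 2 μX, (inner ℂ f (R g) : ℂ) = inner ℂ (R f) g)
    (hRpos : ∀ f : Lp ℂ 2 μX, 0 ≤ ((inner ℂ f (R f) : ℂ)).re)
    (hdensity : ∀ (n : ℕ) (φ : Fin n → Lp ℂ 2 μX),
      (∀ f : Lp ℂ 2 μX,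
          ∑ j, ‖(inner ℂ (φ j) (R f) : ℂ)‖ ^ 2 ≤ ((inner ℂ f (R f) : ℂ)).re) →
      K * ∫ x, (∑ j, ‖φ j x‖ ^ 2) ^ (p / (p - 1)) ∂μX
        ≤ ∑ j, ((inner ℂ (φ j) (R (φ j)) : ℂ)).re)
    (b : X → ℝ) (hb : ∀ x, 0 ≤ b x) (hbLp : MemLp b (ENNReal.ofReal p) μX) :
    ∀ μ : ℝ, 0 < μ → ∀ (m : ℕ) (g : Fin m → Lp ℂ 2 μX),
      (∀ i j, (inner ℂ (g i) (R (g j)) : ℂ) = if i = j then 1 else 0) →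
      ∑ i, ((∫ x, b x * ‖g i x‖ ^ 2 ∂μX) - μ)
        ≤ K ^ (-p + 1) * ((p - 1) ^ (p - 1) / p ^ p) * μ ^ (-p + 1) *
            ∫ x, b x ^ p ∂μX := by
  intro μ hμ m g hortho
  obtain ⟨S, hS⟩ := LinearMap.IsSymmetric.exists_inner_map_eq_inner_map_map (R := R)
    (fun f g => (hRsym f g).symm) hRpos
  set p' := p / (p - 1)
  have hpq : p.HolderConjugate p' := .conjExponent hp
  have hD : DensityInequality S K p' := by
    simp only [hS, ← RCLike.re_to_complex, inner_self_eq_norm_sq] at hdensity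
    exact hdensity
  have hon : Orthonormal ℂ fun i => S (g i) :=
    orthonormal_iff_ite.mpr (by simpa only [hS] using hortho)
  have hsq := hD.memLp_sq_norm hpq.symm.lt.le hK
  have hρ : MemLp (fun x => ∑ j, ‖g j x‖ ^ 2) (ENNReal.ofReal p') μX :=
    memLp_finsetSum _ fun j _ => hsq (g j)
  have hbg (i : Fin m) : Integrable (fun x => b x * ‖g i x‖ ^ 2) μX := by
    have := hpq.ennrealOfReal
    exact hbLp.integrable_mul (hsq (g i))
  have hsum : ∑ i, ∫ x, b x * ‖g i x‖ ^ 2 ∂μX = ∫ x, b x * ∑ j, ‖g j x‖ ^ 2 ∂μX := by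
    rw [← integral_finsetSum _ fun i _ => hbg i]
    simp_rw [Finset.mul_sum]
  have hyoung := integral_mul_le_rpow_add_rpow hpq (mul_pos hK hμ) hb (fun x => by positivity)
    (hbLp.integrable_rpow_of_nonneg hpq.pos hb)
    (hρ.integrable_rpow_of_nonneg hpq.symm.pos fun x => by positivity)
  calc ∑ i, ((∫ x, b x * ‖g i x‖ ^ 2 ∂μX) - μ)
      = ∫ x, b x * ∑ j, ‖g j x‖ ^ 2 ∂μX - m * μ := by
        rw [Finset.sum_sub_distrib, hsum]; simp
    _ ≤ (p' * (K * μ)) ^ (1 - p) / p * ∫ x, b x ^ p ∂μX := by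
        linarith [mul_le_mul_of_nonneg_right (hD.integral_sum_rpow_le_card hon) hμ.le]
    _ = _ := by rw [conjExponent_mul_rpow_one_sub_div hp hK hμ]

/-- Duality (one direction of Lemma 3): let `A` be a positive operator with trivial kernel
on `L²(X)`, `X` sigma-finite, encoded through its (positive, symmetric, injective) inverse
`R = A⁻¹`. Suppose the density inequality (ii): for every finite-rank
`γ = Σ_j |φ_j⟩⟨φ_j|` with `0 ≤ γ ≤ A` (equivalently `⟨Rf, γ Rf⟩ ≤ ⟨f, Rf⟩` for all `f`),
`tr γ^{1/2} A⁻¹ γ^{1/2} = Σ_j ⟨φ_j, Rφ_j⟩ ≥ K ∫ γ(x,x)^{p'} dx` with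
`γ(x,x) = Σ_j |φ_j(x)|²` and `p' = p/(p-1)`. Then the eigenvalue inequality (i) holds:
for every `0 ≤ b ∈ L_p(X)` and `μ > 0`,
`tr(A^{1/2} b A^{1/2} - μ)_+ ≤ D μ^{-p+1} ∫ b^p dx` with `D = K^{-p+1}(p-1)^{p-1}/p^p`.
Variationally the latter trace bound says: for every finite family `g` orthonormal in the
inner product `⟨·, R·⟩` (i.e. `g_i = A^{1/2} f_i` with `f_i` orthonormal in `L²`),
`Σ_i (∫ b|g_i|² dx - μ) ≤ D μ^{-p+1} ∫ b^p dx`. -/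
theorem duality_density_to_eigenvalue
    {X : Type*} [MeasurableSpace X] {μX : Measure X} [SigmaFinite μX]
    {p K : ℝ} (hp : 1 < p) (hK : 0 < K)
    (R : Lp ℂ 2 μX →ₗ[ℂ] Lp ℂ 2 μX)
    (hRsym : ∀ f g : Lp ℂ 2 μX, (inner ℂ f (R g) : ℂ) = inner ℂ (R f) g)
    (hRpos : ∀ f : Lp ℂ 2 μX, 0 ≤ ((inner ℂ f (R f) : ℂ)).re)
    (hRinj : Function.Injective R)
    (hdensity : ∀ (n : ℕ) (φ : Fin n → Lp ℂ 2 μX),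
      (∀ f : Lp ℂ 2 μX,
          ∑ j, ‖(inner ℂ (φ j) (R f) : ℂ)‖ ^ 2 ≤ ((inner ℂ f (R f) : ℂ)).re) →
      K * ∫ x, (∑ j, ‖φ j x‖ ^ 2) ^ (p / (p - 1)) ∂μX
        ≤ ∑ j, ((inner ℂ (φ j) (R (φ j)) : ℂ)).re)
    (b : X → ℝ) (hb : ∀ x, 0 ≤ b x) (hbLp : MemLp b (ENNReal.ofReal p) μX) :
    ∀ μ : ℝ, 0 < μ → ∀ (m : ℕ) (g : Fin m → Lp ℂ 2 μX),
      (∀ i j, (inner ℂ (g i) (R (g j)) : ℂ) = if i = j then 1 else 0) →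
      ∑ i, ((∫ x, b x * ‖g i x‖ ^ 2 ∂μX) - μ)
        ≤ K ^ (-p + 1) * ((p - 1) ^ (p - 1) / p ^ p) * μ ^ (-p + 1) *
            ∫ x, b x ^ p ∂μX :=
  duality_density_to_eigenvalue_general hp hK R hRsym hRpos hdensity b hb hbLp
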